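/- (Pairwise flipping.) Let π : Y → Y be a fixed-point-free involution pairing each class with a distinct partner class, and let 0 ≤ ρ ≤ 1/2. Suppose the class-dependent transition matrix is given by t_{y,y} = 1 − ρ, t_{π(y),y} = ρ, and t_{ỹ,y} = 0 for ỹ ∉ {y, π(y)}. Assume there is a measurable map x ↦ y_x such that for μ-almost every x, y_x maximizes y ↦ η_y(x) and the clean conditional distribution at x is supported on the pair {y_x, π(y_x)}, i.e., η_{π(y_x)}(x) = 1 − η_{y_x}(x). Then the Bayes error rate of the noisy distribution satisfies R*_ρ = R* + ρ (1 − 2 R*). -/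

import Mathlib

open MeasureTheory

/-!
Under pairwise flipping the noisy posterior is `(1 - ρ) η_y + ρ η_{π y}`. At almost every `x`
the clean posterior lives on `{y_x, π y_x}` with mass `m ≥ 1/2` on `y_x`, so the noisy posterior
has mass `(1 - ρ) m + ρ (1 - m)` on `y_x`, zero off the pair, and, because `ρ ≤ 1/2`, its maximum
is still attained at `y_x`. Hence `1 - max η^ρ = (1 - 2ρ) (1 - max η) + ρ` pointwise, and the
identity for the Bayes error rates follows by integrating this affine relation.
-/

lemma ciSup_eq_of_forall_le {ι α : Type*} [ConditionallyCompleteLattice α] {f : ι → α} {a : ι}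
    (h : ∀ i, f i ≤ f a) : ⨆ i, f i = f a :=
  IsGreatest.csSup_eq ⟨⟨a, rfl⟩, Set.forall_mem_range.2 h⟩

section PairwiseFlipping

variable {Y : Type*} [Fintype Y]

lemma eq_zero_of_sum_eq_add {p : Y → ℝ} (hnn : ∀ y, 0 ≤ p y) {a b : Y} (hab : a ≠ b)
    (hsum : ∑ y, p y = p a + p b) {y : Y} (hya : y ≠ a) (hyb : y ≠ b) : p y = 0 := by
  classical
  have hle : ∑ z ∈ {a, b, y}, p z ≤ ∑ z, p z :=
    Finset.sum_le_sum_of_subset_of_nonneg (Finset.subset_univ _) fun z _ _ => hnn z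
  rw [Finset.sum_insert (by simp [hab, hya.symm]), Finset.sum_pair hyb.symm] at hle
  linarith [hnn y]

lemma sum_pairFlip_mul {π : Y → Y} (hπ : Function.Involutive π) (hfpf : ∀ y, π y ≠ y)
    {ρ : ℝ} {t : Y → Y → ℝ} (htd : ∀ y, t y y = 1 - ρ) (htp : ∀ y, t (π y) y = ρ)
    (hto : ∀ y' y, y' ≠ y → y' ≠ π y → t y' y = 0) (p : Y → ℝ) (y' : Y) :
    ∑ y, t y' y * p y = (1 - ρ) * p y' + ρ * p (π y') := by
  have htp' : t y' (π y') = ρ := by simpa only [hπ y'] using htp (π y')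
  rw [Fintype.sum_eq_add y' (π y') (hfpf y').symm, htd, htp']
  rintro y ⟨hy, hyπ⟩
  rw [hto y' y (Ne.symm hy) (fun h => hyπ (by rw [h, hπ])), zero_mul]

lemma iSup_pairFlip_eq {π : Y → Y} (hπ : Function.Involutive π) (hfpf : ∀ y, π y ≠ y)
    {ρ : ℝ} (hρ0 : 0 ≤ ρ) (hρh : ρ ≤ 1 / 2) {p : Y → ℝ} (hnn : ∀ y, 0 ≤ p y)
    (hsum : ∑ y, p y = 1) {a : Y} (hmax : ∀ y, p y ≤ p a) (hpair : p (π a) = 1 - p a) :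
    ⨆ y, ((1 - ρ) * p y + ρ * p (π y)) = (1 - ρ) * p a + ρ * (1 - p a) := by
  have hzero : ∀ y, y ≠ a → y ≠ π a → p y = 0 := fun y =>
    eq_zero_of_sum_eq_add hnn (hfpf a).symm (by rw [hsum, hpair]; ring)
  have hhalf : 1 - p a ≤ p a := hpair ▸ hmax (π a)
  have hcompl : 0 ≤ 1 - p a := hpair ▸ hnn (π a)
  rw [← hpair]
  refine ciSup_eq_of_forall_le fun y => ?_
  rcases eq_or_ne y a with rfl | hya
  · exact le_rfl
  rcases eq_or_ne y (π a) with rfl | hyb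
  · rw [hπ, hpair]
    nlinarith [mul_nonneg (by linarith : (0 : ℝ) ≤ 1 - 2 * ρ) (by linarith : 0 ≤ 2 * p a - 1)]
  · rw [hzero y hya hyb, hzero (π y) (fun h => hyb (by rw [← h, hπ])) (hπ.injective.ne hya),
      hpair]
    nlinarith [mul_nonneg (by linarith : (0 : ℝ) ≤ 1 - ρ) (hnn a), mul_nonneg hρ0 hcompl]

lemma integrable_one_sub_iSup {X : Type*} [MeasurableSpace X] (μ : Measure X)
    [IsFiniteMeasure μ] {η : X → Y → ℝ} (hmeas : ∀ y, Measurable fun x => η x y)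
    (hnn : ∀ x y, 0 ≤ η x y) (hsum : ∀ x, ∑ y, η x y = 1) :
    Integrable (fun x => 1 - ⨆ y, η x y) μ := by
  refine .of_bound (measurable_const.sub (Measurable.iSup hmeas)).aestronglyMeasurable 1
    (.of_forall fun x => ?_)
  have hsup_nonneg : 0 ≤ ⨆ y, η x y := Real.iSup_nonneg (hnn x)
  have hsup_le_one : ⨆ y, η x y ≤ 1 := Real.iSup_le (fun y => hsum x ▸
    Finset.single_le_sum (fun z _ => hnn x z) (Finset.mem_univ y)) zero_le_one
  rw [Real.norm_eq_abs, abs_le]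
  constructor <;> linarith

end PairwiseFlipping

theorem ber_pairwise_flipping_general
    {X : Type*} [MeasurableSpace X] (μ : Measure X) [IsProbabilityMeasure μ]
    {Y : Type*} [Fintype Y]
    (η : X → Y → ℝ)
    (hmeas : ∀ y, Measurable fun x => η x y)
    (hnn : ∀ x y, 0 ≤ η x y)
    (hsum : ∀ x, ∑ y, η x y = 1)
    (π : Y → Y) (hinv : ∀ y, π (π y) = y) (hfpf : ∀ y, π y ≠ y)
    (ρ : ℝ) (hρ0 : 0 ≤ ρ) (hρh : ρ ≤ 1 / 2)
    (t : Y → Y → ℝ)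
    (htd : ∀ y, t y y = 1 - ρ)
    (htp : ∀ y, t (π y) y = ρ)
    (hto : ∀ y' y, y' ≠ y → y' ≠ π y → t y' y = 0)
    (ηρ : X → Y → ℝ)
    (hηρ : ∀ x y', ηρ x y' = ∑ y, t y' y * η x y)
    (yx : X → Y)
    (hmax : ∀ᵐ x ∂μ, (∀ y, η x y ≤ η x (yx x)) ∧ η x (π (yx x)) = 1 - η x (yx x))
    (Rstar Rρ : ℝ)
    (hR : Rstar = ∫ x, (1 - ⨆ y, η x y) ∂μ)
    (hRρ : Rρ = ∫ x, (1 - ⨆ y', ηρ x y') ∂μ) :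
    Rρ = Rstar + ρ * (1 - 2 * Rstar) := by
  have hnoisy : ∀ x y', ηρ x y' = (1 - ρ) * η x y' + ρ * η x (π y') := fun x y' =>
    (hηρ x y').trans (sum_pairFlip_mul hinv hfpf htd htp hto (η x) y')
  have hpointwise : ∀ᵐ x ∂μ,
      1 - ⨆ y', ηρ x y' = (1 - 2 * ρ) * (1 - ⨆ y, η x y) + ρ := by
    filter_upwards [hmax] with x ⟨hle, hpair⟩
    simp only [hnoisy x]
    rw [iSup_pairFlip_eq hinv hfpf hρ0 hρh (hnn x) (hsum x) hle hpair, ciSup_eq_of_forall_le hle]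
    ring
  rw [hRρ, integral_congr_ae hpointwise,
    integral_add ((integrable_one_sub_iSup μ hmeas hnn hsum).const_mul _) (integrable_const ρ),
    integral_const_mul, integral_const, probReal_univ, one_smul, ← hR]
  ring

/-- Pairwise label flipping: if each class is flipped to its partner class
`π y` with probability `ρ ≤ 1/2`, and the clean conditional distribution is
a.e. supported on the pair `{y_x, π y_x}` with `y_x` a Bayes label, then
`R*_ρ = R* + ρ (1 − 2 R*)`. -/
theorem ber_pairwise_flipping
    {X : Type*} [MeasurableSpace X] (μ : Measure X) [IsProbabilityMeasure μ]
    {Y : Type*} [Fintype Y] [Nonempty Y] [MeasurableSpace Y] [MeasurableSingletonClass Y]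
    (hC : 2 ≤ Fintype.card Y)
    (η : X → Y → ℝ)
    (hmeas : ∀ y, Measurable fun x => η x y)
    (hnn : ∀ x y, 0 ≤ η x y)
    (hsum : ∀ x, ∑ y, η x y = 1)
    (π : Y → Y) (hinv : ∀ y, π (π y) = y) (hfpf : ∀ y, π y ≠ y)
    (ρ : ℝ) (hρ0 : 0 ≤ ρ) (hρh : ρ ≤ 1 / 2)
    (t : Y → Y → ℝ)
    (htd : ∀ y, t y y = 1 - ρ)
    (htp : ∀ y, t (π y) y = ρ)
    (hto : ∀ y' y, y' ≠ y → y' ≠ π y → t y' y = 0)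
    (ηρ : X → Y → ℝ)
    (hηρ : ∀ x y', ηρ x y' = ∑ y, t y' y * η x y)
    (yx : X → Y) (hyx : Measurable yx)
    (hmax : ∀ᵐ x ∂μ, (∀ y, η x y ≤ η x (yx x)) ∧ η x (π (yx x)) = 1 - η x (yx x))
    (Rstar Rρ : ℝ)
    (hR : Rstar = ∫ x, (1 - ⨆ y, η x y) ∂μ)
    (hRρ : Rρ = ∫ x, (1 - ⨆ y', ηρ x y') ∂μ) :
    Rρ = Rstar + ρ * (1 - 2 * Rstar) :=
  ber_pairwise_flipping_general μ η hmeas hnn hsum π hinv hfpf ρ hρ0 hρh t htd htp hto ηρ hηρ yx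
    hmax Rstar Rρ hR hRρ
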